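/- The function g(u) = u·log((u+1)/(u-1)) - 2 defined for u > 1 is positive, strictly decreasing, and satisfies g(u) = O(u⁻²) as u → ∞; specifically g(u) ≤ 4/(3(u²-1)) for u > 1. -/

import Mathlib

/-!
With `t = u⁻¹ ∈ (0, 1)` we have `log ((u + 1) / (u - 1)) = log (1 + t) - log (1 - t) = 2 artanh t`,
so `g u = ∑_{k ≥ 0} 2 / (2k + 3) · t ^ (2k + 2)`, a power series in `t` with positive coefficients
and no constant term. Hence `g > 0`, and `g` increases with `t`, i.e. decreases in `u`. Bounding
every coefficient by the first one, `2/3`, leaves a geometric series: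
`g u ≤ (2/3) · t² / (1 - t²) = 2 / (3 (u² - 1))`, which is also `O(u⁻²)`.
-/

open Filter

noncomputable section

namespace WeilPetersson

def kernel (u : ℝ) : ℝ := u * Real.log ((u + 1) / (u - 1)) - 2

def kernelCoeff (t : ℝ) (k : ℕ) : ℝ := 2 / (2 * k + 3) * t ^ (2 * k + 2)

theorem hasSum_kernelCoeff {u : ℝ} (hu : 1 < u) : HasSum (kernelCoeff u⁻¹) (kernel u) := by
  have hu0 : 0 < u := by linarith
  have hut : u * u⁻¹ = 1 := mul_inv_cancel₀ hu0.ne'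
  have ht : |u⁻¹| < 1 := by
    rw [abs_of_pos (inv_pos.2 hu0)]
    exact inv_lt_one_of_one_lt₀ hu
  have hlog : Real.log (1 + u⁻¹) - Real.log (1 - u⁻¹) = Real.log ((u + 1) / (u - 1)) := by
    rw [← Real.log_div (by positivity) (by linarith [abs_lt.1 ht])]
    congr 1
    field_simp
  have hseries := (Real.hasSum_log_sub_log_of_abs_lt_one ht).mul_left u
  rw [hlog, ← hasSum_nat_add_iff' 1] at hseries
  have hcoeff : kernelCoeff u⁻¹ =
      fun k : ℕ => u * (2 * (1 / (2 * ((k + 1 : ℕ) : ℝ) + 1)) * u⁻¹ ^ (2 * (k + 1) + 1)) := by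
    funext k
    rw [kernelCoeff, show 2 * (k + 1) + 1 = 2 * k + 2 + 1 by ring, pow_succ]
    push_cast
    linear_combination (-(2 / (2 * (k : ℝ) + 3)) * u⁻¹ ^ (2 * k + 2)) * hut
  have hvalue : kernel u = u * Real.log ((u + 1) / (u - 1)) -
      ∑ i ∈ Finset.range 1, u * (2 * (1 / (2 * (i : ℝ) + 1)) * u⁻¹ ^ (2 * i + 1)) := by
    rw [kernel, Finset.sum_range_one]
    push_cast
    linear_combination 2 * hut
  rwa [hcoeff, hvalue]

theorem kernelCoeff_mono {s t : ℝ} (hs : 0 ≤ s) (hst : s ≤ t) (k : ℕ) :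
    kernelCoeff s k ≤ kernelCoeff t k := by
  unfold kernelCoeff
  gcongr

theorem kernelCoeff_zero_strictMonoOn : StrictMonoOn (fun t => kernelCoeff t 0) (Set.Ici 0) := by
  intro s hs t _ hst
  simp only [kernelCoeff, CharP.cast_eq_zero, mul_zero, zero_add]
  gcongr

theorem kernel_pos {u : ℝ} (hu : 1 < u) : 0 < kernel u := by
  have ht : 0 < u⁻¹ := inv_pos.2 (by linarith)
  have hpos : kernelCoeff 0 0 < kernelCoeff u⁻¹ 0 :=
    kernelCoeff_zero_strictMonoOn Set.self_mem_Ici ht.le ht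
  have hzero : HasSum (kernelCoeff 0) 0 := by
    have : kernelCoeff 0 = 0 := by
      funext k
      simp [kernelCoeff]
    exact this ▸ hasSum_zero
  exact hasSum_lt (kernelCoeff_mono le_rfl ht.le) hpos hzero
    (hasSum_kernelCoeff hu)

theorem kernel_strictAntiOn : StrictAntiOn kernel (Set.Ioi 1) := by
  intro u (hu : 1 < u) v _ huv
  have hinv : v⁻¹ < u⁻¹ := inv_strictAnti₀ (by linarith) huv
  have hv0 : 0 ≤ v⁻¹ := (inv_pos.2 (by linarith)).le
  exact hasSum_lt (kernelCoeff_mono hv0 hinv.le)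
    (kernelCoeff_zero_strictMonoOn hv0 (hv0.trans hinv.le) hinv)
    (hasSum_kernelCoeff (hu.trans huv)) (hasSum_kernelCoeff hu)

theorem kernelCoeff_le_geometric (t : ℝ) (k : ℕ) :
    kernelCoeff t k ≤ 2 / 3 * t ^ 2 * (t ^ 2) ^ k := by
  have hcoeff : 2 / (2 * (k : ℝ) + 3) ≤ 2 / 3 := by gcongr; linarith [k.cast_nonneg (α := ℝ)]
  calc kernelCoeff t k = 2 / (2 * k + 3) * (t ^ 2 * (t ^ 2) ^ k) := by
        rw [kernelCoeff, ← pow_mul, ← pow_add, add_comm 2]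
    _ ≤ 2 / 3 * (t ^ 2 * (t ^ 2) ^ k) := by gcongr
    _ = 2 / 3 * t ^ 2 * (t ^ 2) ^ k := by ring

theorem kernel_le {u : ℝ} (hu : 1 < u) : kernel u ≤ 2 / (3 * (u ^ 2 - 1)) := by
  have hu0 : 0 < u := by linarith
  have hr : u⁻¹ ^ 2 < 1 := pow_lt_one₀ (by positivity) (inv_lt_one_of_one_lt₀ hu) two_ne_zero
  have hgeom := (hasSum_geometric_of_lt_one (by positivity) hr).mul_left (2 / 3 * u⁻¹ ^ 2)
  have hsum : 2 / 3 * u⁻¹ ^ 2 * (1 - u⁻¹ ^ 2)⁻¹ = 2 / (3 * (u ^ 2 - 1)) := by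
    have : u ^ 2 - 1 ≠ 0 := by nlinarith
    field_simp
  rw [← hsum]
  exact hasSum_le (kernelCoeff_le_geometric u⁻¹) (hasSum_kernelCoeff hu) hgeom

theorem kernel_isBigO : kernel =O[atTop] fun u => u⁻¹ ^ 2 := by
  refine Asymptotics.IsBigO.of_bound (4 / 3) ?_
  filter_upwards [eventually_ge_atTop (2 : ℝ)] with u hu
  have hu1 : 1 < u := by linarith
  have hu2 : 0 < u ^ 2 - 1 := by nlinarith
  rw [Real.norm_of_nonneg (kernel_pos hu1).le, Real.norm_of_nonneg (by positivity)]
  calc kernel u ≤ 2 / (3 * (u ^ 2 - 1)) := kernel_le hu1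
    _ ≤ 4 / 3 * u⁻¹ ^ 2 := by
      rw [inv_pow, ← div_eq_mul_inv, div_le_div_iff₀ (by positivity) (by positivity)]
      nlinarith

end WeilPetersson

end

open WeilPetersson in
/-- The kernel g(u) = u·log((u+1)/(u-1)) - 2 on (1, ∞) is positive, strictly
decreasing, is O(u⁻²) at infinity, and satisfies g(u) ≤ 4/(3(u²-1)). -/
theorem wp_kernel_properties :
    (∀ u : ℝ, 1 < u → 0 < u * Real.log ((u + 1) / (u - 1)) - 2) ∧
    StrictAntiOn (fun u : ℝ => u * Real.log ((u + 1) / (u - 1)) - 2) (Set.Ioi 1) ∧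
    ((fun u : ℝ => u * Real.log ((u + 1) / (u - 1)) - 2) =O[Filter.atTop]
      fun u : ℝ => u⁻¹ ^ 2) ∧
    (∀ u : ℝ, 1 < u → u * Real.log ((u + 1) / (u - 1)) - 2 ≤ 4 / (3 * (u ^ 2 - 1))) := by
  refine ⟨fun u hu => kernel_pos hu, kernel_strictAntiOn, kernel_isBigO, fun u hu => ?_⟩
  have hu2 : 0 < 3 * (u ^ 2 - 1) := by nlinarith
  calc kernel u ≤ 2 / (3 * (u ^ 2 - 1)) := kernel_le hu
    _ ≤ 4 / (3 * (u ^ 2 - 1)) := by gcongr; norm_num
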